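/- arXiv:1806.03470 — 6 statements merged into one kernel-verified Lean document; each statement's English description precedes it below -/
import Mathlib

section
/- Let N and R be normal subgroups of a finite group G and set L = N ∩ R. Suppose χ ∈ Irr(G) is faithful, χ_N is irreducible, and L is contained in the center Z(G) of G. If the quotient group R/L is perfect, then R = L. -/
open scoped BigOperators Classical Pointwise

noncomputable section

/-- `f` is the character of an irreducible complex representation of `H`. -/
def IsIrrChar (H : Type) [Group H] (f : H → ℂ) : Prop :=
  ∃ V : FDRep ℂ H, CategoryTheory.Simple V ∧ V.character = f

/-- `f` is a positive integer multiple of an irreducible character, i.e. homogeneous. -/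
def IsHomogeneous (H : Type) [Group H] (f : H → ℂ) : Prop :=
  ∃ (ψ : H → ℂ) (n : ℕ+), IsIrrChar H ψ ∧ f = fun h => (n : ℂ) * ψ h

/-- The standard inner product of class functions on a finite group. -/
def charInner (H : Type) [Group H] [Fintype H] (f g : H → ℂ) : ℂ :=
  (Fintype.card H : ℂ)⁻¹ * ∑ x : H, f x * starRingEnd ℂ (g x)

variable {G : Type} [Group G]

/-- Restriction of a class function along `C ≤ A`. -/
def resSub {A C : Subgroup G} (h : C ≤ A) (f : ↥A → ℂ) : ↥C → ℂ :=
  fun c => f ⟨(c : G), h c.2⟩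

/-- Induction of a class function from `B` to `A`, where `B ≤ A`. -/
def indSub [Fintype G] {B A : Subgroup G} (_h : B ≤ A) (f : ↥B → ℂ) : ↥A → ℂ :=
  fun a => (Fintype.card ↥B : ℂ)⁻¹ *
    ∑ x : ↥A, if hx : (x : G) * (a : G) * (x : G)⁻¹ ∈ B then f ⟨_, hx⟩ else 0

/-- Induction of a class function from `A` to `G`. -/
def indG [Fintype G] (A : Subgroup G) (f : ↥A → ℂ) : G → ℂ :=
  fun g => (Fintype.card ↥A : ℂ)⁻¹ *
    ∑ x : G, if hx : x * g * x⁻¹ ∈ A then f ⟨_, hx⟩ else 0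

/-- `f` (a character of `A`) lies over `γ` (a character of `C ≤ A`), i.e. `γ` is a
constituent of the restriction of `f` to `C`. -/
def LiesOver [Fintype G] {A C : Subgroup G} (h : C ≤ A) (f : ↥A → ℂ) (γ : ↥C → ℂ) : Prop :=
  charInner ↥C (resSub h f) γ ≠ 0

/-- The conjugate `γ^g` equals `γ`, i.e. `γ (g x g⁻¹) = γ x` for all `x ∈ C`. -/
def ConjFix {C : Subgroup G} (γ : ↥C → ℂ) (g : G) : Prop :=
  ∀ (x : G) (hx : x ∈ C) (hx' : g * x * g⁻¹ ∈ C), γ ⟨g * x * g⁻¹, hx'⟩ = γ ⟨x, hx⟩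

/-- The conjugate character `φ^g`, given by `φ^g (x) = φ (g x g⁻¹)`, for `R` normal. -/
def conjChar {R : Subgroup G} (hR : R.Normal) (φ : ↥R → ℂ) (g : G) : ↥R → ℂ :=
  fun x => φ ⟨g * (x : G) * g⁻¹, hR.conj_mem (x : G) x.2 g⟩

/-- A character pair `(A, α)` in `G` inducing the character `χ` of `G`. -/
structure CharPair (G : Type) [Group G] [Fintype G] (χ : G → ℂ) where
  A : Subgroup G
  α : ↥A → ℂ
  irr : IsIrrChar ↥A α
  ind_eq : indG A α = χ

/-- `w = (B, β)` arises from `v = (A, α)` by a Clifford correspondence with respect to a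
character pair `(C, γ)` with `C ◁ A` and `C ⊆ N`: `B` is the stabilizer of `γ` in `A` and
`β` is the Clifford correspondent of `α` with respect to `γ`. -/
def EdgeSpec [Fintype G] {χ : G → ℂ} (N : Subgroup G) (v w : CharPair G χ) : Prop :=
  ∃ (C : Subgroup G) (γ : ↥C → ℂ) (_hCA : C ≤ v.A) (hCB : C ≤ w.A) (hBA : w.A ≤ v.A),
    (∀ a ∈ v.A, ∀ c ∈ C, a * c * a⁻¹ ∈ C) ∧
    C ≤ N ∧
    IsIrrChar ↥C γ ∧
    ((w.A : Set G) = {a : G | a ∈ v.A ∧ ConjFix γ a}) ∧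
    LiesOver hCB w.α γ ∧
    indSub hBA w.α = v.α

/-- The Clifford induction graph `C_N(χ)`. -/
def cliffordGraph [Fintype G] (χ : G → ℂ) (N : Subgroup G) : SimpleGraph (CharPair G χ) where
  Adj v w := v ≠ w ∧ (EdgeSpec N v w ∨ EdgeSpec N w v)
  symm := ⟨fun v w h => ⟨h.1.symm, h.2.symm⟩⟩
  loopless := ⟨fun v h => h.1 rfl⟩

/-- The set `Δ` of linear characters `λ` of `R` trivial on `L = N ⊓ R` such that
`φλ = φ^g` for some `g ∈ N`. -/
def Delta (N R : Subgroup G) (φ : ↥R → ℂ) : Set (↥R →* ℂˣ) :=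
  {lam | (∀ x : ↥R, (x : G) ∈ N ⊓ R → lam x = 1) ∧
    ∃ g ∈ N, ∀ (x : ↥R) (hx : g * (x : G) * g⁻¹ ∈ R),
      φ x * (lam x : ℂ) = φ ⟨g * (x : G) * g⁻¹, hx⟩}

/-! Since `χ_N` is irreducible, Schur's lemma makes every element of `G` that centralizes `N` act
as a scalar in the faithful representation affording `χ`, so `C_G(N) ≤ Z(G)`. For `n ∈ N` the
commutators `⁅r, n⁆` with `r ∈ R` lie in `N ⊓ R ≤ Z(G)`, so `r ↦ ⁅r, n⁆` is a homomorphism into an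
abelian group that kills `N ⊓ R`; it factors through the perfect group `R/(N ⊓ R)` and is trivial.
Hence `R ≤ C_G(N) ≤ Z(G)`, and `R/(N ⊓ R)` is abelian and perfect, i.e. trivial. -/
open CategoryTheory Representation Subgroup
open scoped commutatorElement IsMulCommutative

theorem MonoidHom.eq_one_of_commutator_eq_top {P A : Type*} [Group P] [CommGroup A]
    (f : P →* A) (hP : commutator P = ⊤) : f = 1 :=
  ext fun x => Abelianization.commutator_subset_ker f (hP ▸ mem_top x)

theorem eq_one_of_commutator_eq_top_of_commute {P : Type*} [Group P] (hP : commutator P = ⊤)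
    (hcomm : ∀ a b : P, Commute a b) (x : P) : x = 1 := by
  have : IsMulCommutative P := ⟨⟨hcomm⟩⟩
  rw [← mem_bot, ← _root_.commutator_eq_bot, hP]
  exact mem_top x

theorem commutatorElement_mul_left_of_mem_center {a b c : G} (hb : ⁅b, c⁆ ∈ center G) :
    ⁅a * b, c⁆ = ⁅a, c⁆ * ⁅b, c⁆ := by
  rw [commutatorElement_mul_left_eq_conj_mul, mem_center_iff.mp hb a, mul_inv_cancel_right,
    mem_center_iff.mp hb]

def commutatorElementLeftHom (R : Subgroup G) (n : G) (h : ∀ r ∈ R, ⁅r, n⁆ ∈ center G) :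
    R →* center G where
  toFun r := ⟨⁅(r : G), n⁆, h r r.2⟩
  map_one' := Subtype.ext (commutatorElement_one_left n)
  map_mul' _ s := Subtype.ext (commutatorElement_mul_left_of_mem_center (h s s.2))

theorem le_centralizer_of_inf_le_center_of_perfect {N R : Subgroup G} [N.Normal] [R.Normal]
    [((N ⊓ R).subgroupOf R).Normal] (hcenter : N ⊓ R ≤ center G)
    (hperf : commutator (R ⧸ (N ⊓ R).subgroupOf R) = ⊤) : R ≤ centralizer N := by
  intro r hr n hn
  have hcomm : ∀ s ∈ R, ⁅s, n⁆ ∈ center G := fun s hs =>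
    hcenter (inf_comm R N ▸ commutator_le_inf R N (commutator_mem_commutator hs hn))
  have hL : ∀ l ∈ (N ⊓ R).subgroupOf R, commutatorElementLeftHom R n hcomm l = 1 := fun l hl =>
    Subtype.ext (commutatorElement_eq_one_iff_mul_comm.mpr
      (mem_center_iff.mp (hcenter (mem_subgroupOf.mp hl)) n).symm)
  have hlift := (QuotientGroup.lift _ _ hL).eq_one_of_commutator_eq_top hperf
  have hrn : ⁅r, n⁆ = 1 :=
    congr_arg Subtype.val (DFunLike.congr_fun hlift (QuotientGroup.mk (⟨r, hr⟩ : R)))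
  exact (commutatorElement_eq_one_iff_mul_comm.mp hrn).symm

namespace FDRep

variable {k H : Type} [Field k] [Group H]

theorem ρ_injective_of_character_faithful {V : FDRep k H}
    (hV : ∀ h : H, V.character h = V.character 1 → h = 1) : Function.Injective V.ρ :=
  (injective_iff_map_eq_one V.ρ).mpr fun h hρ => hV h (by simp only [character, hρ, map_one])

theorem simple_of_character_eq [IsAlgClosed k] [CharZero k] [Fintype H] {V W : FDRep k H}
    [Simple W] (h : V.character = W.character) : Simple V := by
  rw [simple_iff_char_is_norm_one, h, ← simple_iff_char_is_norm_one]
  infer_instance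

end FDRep

namespace Representation

theorem centralizer_le_center {k E : Type} [CommSemiring k] [AddCommMonoid E] [Module k E]
    {ρ : Representation k G E} (hρ : Function.Injective ρ) {N : Subgroup G}
    (hN : ∀ f : Module.End k E, (∀ n : N, Commute (ρ n) f) → ∃ c : k, f = c • 1) :
    centralizer N ≤ center G := by
  intro g hg
  obtain ⟨c, hc⟩ := hN (ρ g) fun n => (show Commute (n : G) g from hg n n.2).map ρ
  refine mem_center_iff.mpr fun h => hρ ?_
  rw [map_mul, map_mul, hc, smul_mul_assoc, one_mul, mul_smul_one]

variable {k H E : Type} [Field k] [Group H] [AddCommGroup E] [Module k E]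

theorem finrank_intertwiningMap_self_of_simple [IsAlgClosed k] [Fintype H]
    [NeZero (Fintype.card H : k)] [FiniteDimensional k E] {π : Representation k H E}
    (hπ : Simple (FDRep.of π)) : Module.finrank k (IntertwiningMap π π) = 1 := by
  have : Invertible (Fintype.card H : k) := invertibleOfNonzero (NeZero.ne _)
  rw [← (invariantsEquivIntertwiningMap π π).finrank_eq]
  exact (linHom.invariantsEquivFDRepHom (FDRep.of π) (FDRep.of π)).finrank_eq.trans
    (finrank_endomorphism_simple_eq_one k _)

theorem exists_eq_smul_one_of_commute {π : Representation k H E}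
    (hπ : Module.finrank k (IntertwiningMap π π) = 1) {f : Module.End k E}
    (hf : ∀ h, Commute (π h) f) : ∃ c : k, f = c • 1 := by
  have hid : IntertwiningMap.id π ≠ 0 := by
    intro h0
    have hE : ∀ v : E, v = 0 := fun v => congr($h0 v)
    have : Subsingleton (IntertwiningMap π π) := ⟨fun a b => by ext v; simp [hE v]⟩
    simp [Module.finrank_zero_of_subsingleton] at hπ
  obtain ⟨c, hc⟩ := (finrank_eq_one_iff_of_nonzero' _ hid).mp hπ
    (f.intertwiningMap_of_isIntertwiningMap π π fun h v => (LinearMap.congr_fun (hf h).eq v).symm)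
  exact ⟨c, LinearMap.ext fun v => by simpa using congr($hc v).symm⟩

end Representation

/-- Let `N, R ◁ G`, `L = N ⊓ R`, and `χ ∈ Irr(G)` faithful with `χ_N` irreducible and
`L ⊆ Z(G)`. If `R/L` is perfect, then `R = L`. -/
theorem statement3 {G : Type} [Group G] [Fintype G] (N R : Subgroup G) [N.Normal] [R.Normal]
    [((N ⊓ R).subgroupOf R).Normal]
    (χ : G → ℂ) (hχ : IsIrrChar G χ)
    (hfaithful : ∀ g : G, χ g = χ 1 → g = 1)
    (hresN : IsIrrChar ↥N fun n : ↥N => χ ↑n)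
    (hcenter : N ⊓ R ≤ Subgroup.center G)
    (hperf : commutator (↥R ⧸ (N ⊓ R).subgroupOf R) = ⊤) :
    R = N ⊓ R := by
  obtain ⟨V, -, rfl⟩ := hχ
  obtain ⟨W, hW, hWV⟩ := hresN
  have hVN : Simple (FDRep.of (V.ρ.comp N.subtype)) := FDRep.simple_of_character_eq hWV.symm
  have hRZ : R ≤ center G := (le_centralizer_of_inf_le_center_of_perfect hcenter hperf).trans <|
    centralizer_le_center (FDRep.ρ_injective_of_character_faithful hfaithful) fun _ =>
      exists_eq_smul_one_of_commute (finrank_intertwiningMap_self_of_simple hVN)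
  have hRL : ∀ a b : R ⧸ (N ⊓ R).subgroupOf R, Commute a b := by
    rintro ⟨a⟩ ⟨b⟩
    exact congr_arg QuotientGroup.mk (Subtype.ext (mem_center_iff.mp (hRZ b.2) a))
  refine le_antisymm (fun r hr => ?_) inf_le_right
  exact mem_subgroupOf.mp <| (QuotientGroup.eq_one_iff _).mp <|
    eq_one_of_commutator_eq_top_of_commute hperf hRL (QuotientGroup.mk (⟨r, hr⟩ : R))
end
end

section
/- Let G be a group, let N and R be normal subgroups of G, and let L be a subgroup with L ⊆ Z(G), [N, R] ⊆ L, and R = [R, R]·L (i.e., R/L is perfect modulo the central subgroup L). Then [N, R] = 1; that is, R centralizes N. -/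
/- Three subgroups lemma: `⁅⁅R, N⁆, R⁆` and `⁅⁅N, R⁆, R⁆` vanish because `⁅N, R⁆` is central, hence so does
`⁅⁅R, R⁆, N⁆`. Thus `R = ⁅R, R⁆ ⊔ L` centralizes `N`, since both `⁅R, R⁆` and the central `L` do. -/

open scoped BigOperators Classical Pointwise

noncomputable section

variable {G : Type} [Group G]

namespace Subgroup

theorem commutator_commutator_eq_bot_of_commutator_le_center {G : Type*} [Group G]
    {N R : Subgroup G} (h : ⁅N, R⁆ ≤ center G) : ⁅⁅R, R⁆, N⁆ = ⊥ := by
  have hRNR : ⁅⁅R, N⁆, R⁆ = ⊥ := commutator_eq_bot_iff_le_centralizer.mpr <|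
    ((commutator_comm_le R N).trans h).trans (center_le_centralizer _)
  have hNRR : ⁅⁅N, R⁆, R⁆ = ⊥ := commutator_eq_bot_iff_le_centralizer.mpr <|
    h.trans (center_le_centralizer _)
  exact commutator_commutator_eq_bot_of_rotate hRNR hNRR

end Subgroup

theorem statement4_general {G : Type*} [Group G] (N R L : Subgroup G)
    (hLZ : L ≤ Subgroup.center G) (hNRL : ⁅N, R⁆ ≤ L) (hperf : ⁅R, R⁆ ⊔ L = R) :
    ⁅N, R⁆ = ⊥ := by
  have hRR : ⁅R, R⁆ ≤ Subgroup.centralizer N :=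
    Subgroup.commutator_eq_bot_iff_le_centralizer.mp <|
      Subgroup.commutator_commutator_eq_bot_of_commutator_le_center (hNRL.trans hLZ)
  have hL : L ≤ Subgroup.centralizer N := hLZ.trans (Subgroup.center_le_centralizer _)
  rw [Subgroup.commutator_eq_bot_iff_le_centralizer, Subgroup.le_centralizer_iff, ← hperf]
  exact sup_le hRR hL

/-- If `N, R ◁ G`, `L ⊆ Z(G)`, `[N, R] ⊆ L` and `R = [R, R]·L`, then `[N, R] = 1`,
i.e. `R` centralizes `N`. -/
theorem statement4 {G : Type*} [Group G] (N R L : Subgroup G) [N.Normal] [R.Normal]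
    (hLZ : L ≤ Subgroup.center G) (hNRL : ⁅N, R⁆ ≤ L) (hperf : ⁅R, R⁆ ⊔ L = R) :
    ⁅N, R⁆ = ⊥ :=
  statement4_general N R L hLZ hNRL hperf
end
end

section
/- Let G be a finite group, χ ∈ Irr(G), and let N ≤ M be subgroups of G. If the restriction χ_N is irreducible and χ(x) = 0 for every x ∈ M \ N, then M = N. -/
open scoped BigOperators Classical Pointwise

noncomputable section

variable {G : Type} [Group G]

/-!
Compare the norms `∑ χ(g) χ(g⁻¹)` of `χ` over `N` and over `M`. Since `χ_N` is irreducible,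
the sum over `N` is `|N|`; since `χ` vanishes on `M \ N`, the sum over `M` is the same number;
but the sum over `M` is `|M| · dim End(χ_M)`. Hence `|M|` divides `|N|`, and `N ≤ M` forces
`M = N`.
-/

open CategoryTheory

namespace FDRep

variable {k : Type*} [Field k] {G : Type*} [Group G]

theorem exists_character_eq_restrict (V : FDRep k G) (H : Subgroup G) :
    ∃ W : FDRep k H, ∀ h : H, W.character h = V.character h :=
  ⟨FDRep.of (V.ρ.comp H.subtype), fun _ => rfl⟩

theorem sum_char_mul_char_inv_eq_card_mul_finrank_end [Fintype G] [Invertible (Nat.card G : k)]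
    (V : FDRep k G) :
    ∑ g : G, V.character g * V.character g⁻¹ = Nat.card G * Module.finrank k (V ⟶ V) := by
  rw [← V.scalar_product_char_eq_finrank_equivariant V,
    mul_inv_cancel_left₀ (Invertible.ne_zero _)]

end FDRep

theorem Subgroup.sum_eq_sum_of_le_of_eq_zero {G β : Type*} [Group G] [Fintype G]
    [AddCommMonoid β] {N M : Subgroup G} (hNM : N ≤ M) (f : G → β)
    (hf : ∀ x ∈ M, x ∉ N → f x = 0) :
    ∑ m : M, f m = ∑ n : N, f n := by
  rw [← Finset.sum_subtype (Finset.univ.filter (· ∈ M)) (by simp) f,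
    ← Finset.sum_subtype (Finset.univ.filter (· ∈ N)) (by simp) f]
  refine (Finset.sum_subset (fun x => ?_) fun x hxM hxN => ?_).symm
  · simpa using @hNM x
  · simp_all

/-- If `χ ∈ Irr(G)`, `N ≤ M` are subgroups, `χ_N` is irreducible and `χ` vanishes on
`M \ N`, then `M = N`. -/
theorem statement6 {G : Type} [Group G] [Fintype G] (χ : G → ℂ) (hχ : IsIrrChar G χ)
    (N M : Subgroup G) (hNM : N ≤ M)
    (hres : IsIrrChar ↥N fun n : ↥N => χ ↑n)
    (hvan : ∀ x ∈ M, x ∉ N → χ x = 0) :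
    M = N := by
  obtain ⟨V, -, rfl⟩ := hχ
  obtain ⟨U, hU, hUchar⟩ := hres
  obtain ⟨W, hWchar⟩ := V.exists_character_eq_restrict M
  have hN : ∑ n : N, V.character n * V.character n⁻¹ = Nat.card N := by
    simpa [hUchar] using (FDRep.simple_iff_char_is_norm_one U).1 hU
  have hM : ∑ m : M, V.character m * V.character m⁻¹ =
      Nat.card M * Module.finrank ℂ (W ⟶ W) := by
    simpa [hWchar] using W.sum_char_mul_char_inv_eq_card_mul_finrank_end
  have hMN : ∑ m : M, V.character m * V.character m⁻¹ =
      ∑ n : N, V.character n * V.character n⁻¹ :=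
    Subgroup.sum_eq_sum_of_le_of_eq_zero hNM (fun x => V.character x * V.character x⁻¹)
      fun x hxM hxN => by simp [hvan x hxM hxN]
  have hcard : Nat.card N = Nat.card M * Module.finrank ℂ (W ⟶ W) := by
    rw [hMN, hN] at hM
    exact_mod_cast hM
  refine (Subgroup.eq_of_le_of_card_ge hNM (Nat.le_of_dvd Nat.card_pos ?_)).symm
  exact Dvd.intro _ hcard.symm
end
end

section
/- Let G be a finite group, N a normal subgroup of G, A ≤ G a subgroup, and α ∈ Irr(A). If the induced character α^G is irreducible and its restriction (α^G)_N to N is irreducible, then the restriction α_{A∩N} of α to A ∩ N is irreducible. -/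
open scoped BigOperators Classical Pointwise

noncomputable section

variable {G : Type} [Group G]

/-!
Let `α°` be `α` extended by zero to `G` and `e = ⟨α_{A∩N}, α_{A∩N}⟩`. Expanding the norm of
`(α^G)_N`, which is `1`, by the induction formula and reindexing over `N` (normal in `G`) gives
`|N| |A|² = |G| ∑_{t ∈ G} T_t` with `T_t = ∑_{m ∈ N} α°(m) α°(t m⁻¹ t⁻¹)`. The summand vanishes
off `K_t = N ∩ A ∩ t⁻¹At`, where it pairs two restrictions of the representation of `α` to `K_t`,
so `T_t` is `|K_t|` times a dimension of intertwiners, a natural number; for `t ∈ A` it is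
`|A ∩ N| e`. Hence `|N| |A|² ≥ |G| |A| |A ∩ N| e ≥ |N| |A|² e` by `|N| |A| ≤ |G| |A ∩ N|`,
and `e = 1`.
-/

open CategoryTheory

section Restriction

variable {K H : Type} [Group K] [Group H]

theorem FDRep.sum_char_comp_mul_char_comp_inv [Fintype K] (V : FDRep ℂ H) (φ ψ : K →* H) :
    ∑ k, V.character (φ k) * V.character (ψ k⁻¹) =
      Nat.card K * Module.finrank ℂ ((Action.res _ ψ).obj V ⟶ (Action.res _ φ).obj V) := by
  have := invertibleOfNonzero (Nat.cast_ne_zero.mpr (Nat.card_pos (α := K)).ne' : (Nat.card K : ℂ) ≠ 0)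
  rw [← FDRep.scalar_product_char_eq_finrank_equivariant, mul_inv_cancel_left₀ this.ne_zero]
  rfl

theorem FDRep.finrank_end_res_pos (V : FDRep ℂ H) [Simple V] (φ : K →* H) :
    0 < Module.finrank ℂ ((Action.res _ φ).obj V ⟶ (Action.res _ φ).obj V) := by
  refine Module.finrank_pos_iff_exists_ne_zero.mpr ⟨𝟙 _, fun h => id_nonzero V ?_⟩
  have h' := congrArg Action.Hom.hom h
  exact Action.Hom.ext h'

end Restriction

abbrev FDRep.resInf (N : Subgroup G) {A : Subgroup G} (V : FDRep ℂ A) : FDRep ℂ ↥(A ⊓ N) :=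
  (Action.res _ (Subgroup.inclusion inf_le_left)).obj V

theorem Subgroup.sum_eq_sum_of_le [Fintype G] {S T : Subgroup G} (hST : S ≤ T) (F : G → ℂ)
    (hF : ∀ g ∈ T, g ∉ S → F g = 0) : ∑ s : S, F s = ∑ t : T, F t :=
  Fintype.sum_of_injective (Subgroup.inclusion hST) (Subgroup.inclusion_injective hST) _ _
    (fun t ht => hF t t.2 fun hS => ht ⟨⟨t, hS⟩, rfl⟩) fun _ => rfl

theorem Subgroup.card_mul_card_le_card_mul_card_inf [Finite G] (H K : Subgroup G) :
    Nat.card H * Nat.card K ≤ Nat.card G * Nat.card ↥(K ⊓ H) := by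
  have hK : H.relIndex K * Nat.card ↥(K ⊓ H) = Nat.card K := by
    rw [Subgroup.relIndex, ← Subgroup.inf_subgroupOf_left,
      Nat.card_congr (Subgroup.subgroupOfEquivOfLe inf_le_left).toEquiv.symm]
    exact Subgroup.index_mul_card _
  have hle : H.relIndex K ≤ H.index := by
    simpa using Subgroup.relIndex_le_of_le_right le_top
      (by simpa using Subgroup.index_ne_zero_of_finite)
  calc Nat.card H * Nat.card K = Nat.card H * H.relIndex K * Nat.card ↥(K ⊓ H) := by
        rw [← hK, mul_assoc]
    _ ≤ Nat.card H * H.index * Nat.card ↥(K ⊓ H) := by gcongr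
    _ = Nat.card G * Nat.card ↥(K ⊓ H) := by rw [Subgroup.card_mul_index]

def extendByZero (A : Subgroup G) (f : A → ℂ) (g : G) : ℂ :=
  if h : g ∈ A then f ⟨g, h⟩ else 0

section ExtendByZero

variable {A : Subgroup G} (f : A → ℂ)

@[simp]
theorem extendByZero_coe (a : A) : extendByZero A f a = f a := by
  simp [extendByZero]

theorem extendByZero_of_notMem {g : G} (hg : g ∉ A) : extendByZero A f g = 0 := by
  simp [extendByZero, hg]

theorem indG_eq_sum_extendByZero [Fintype G] (g : G) :
    indG A f g = (Nat.card A : ℂ)⁻¹ * ∑ x : G, extendByZero A f (x * g * x⁻¹) := by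
  rw [Nat.card_eq_fintype_card]
  rfl

end ExtendByZero

theorem sum_indG_mul_indG_inv [Fintype G] (N : Subgroup G) [N.Normal] (A : Subgroup G)
    (α : A → ℂ) :
    ∑ n : N, indG A α n * indG A α (n⁻¹ : N) =
      (Nat.card A : ℂ)⁻¹ ^ 2 * Nat.card G *
        ∑ t : G, ∑ m : N, extendByZero A α m * extendByZero A α (t * (m : G)⁻¹ * t⁻¹) := by
  set P : G → ℂ := fun m => ∑ t : G, extendByZero A α m * extendByZero A α (t * m⁻¹ * t⁻¹)
  have hprod : ∀ n : N, indG A α n * indG A α (n⁻¹ : N) = (Nat.card A : ℂ)⁻¹ ^ 2 *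
      ∑ x : G, ∑ y : G,
        extendByZero A α (x * n * x⁻¹) * extendByZero A α (y * (n : G)⁻¹ * y⁻¹) := by
    intro n
    rw [indG_eq_sum_extendByZero, indG_eq_sum_extendByZero, Subgroup.coe_inv,
      ← Finset.sum_mul_sum]
    ring
  have hconj : ∀ (x : G) (n : N), ∑ y : G,
      extendByZero A α (x * n * x⁻¹) * extendByZero A α (y * (n : G)⁻¹ * y⁻¹) =
        P (MulAut.conjNormal x n) := by
    intro x n
    refine Fintype.sum_equiv (Equiv.mulRight x⁻¹) _ _ fun y => ?_
    simp only [MulAut.conjNormal_apply, Equiv.coe_mulRight]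
    congr 2
    group
  have hP : ∀ x : G, ∑ n : N, P (MulAut.conjNormal x n) = ∑ m : N, P m :=
    fun x => Fintype.sum_equiv (MulAut.conjNormal x).toEquiv _ _ fun _ => rfl
  calc ∑ n : N, indG A α n * indG A α (n⁻¹ : N)
      = (Nat.card A : ℂ)⁻¹ ^ 2 * ∑ x : G, ∑ n : N, ∑ y : G,
          extendByZero A α (x * n * x⁻¹) * extendByZero A α (y * (n : G)⁻¹ * y⁻¹) := by
        simp only [hprod, ← Finset.mul_sum]
        rw [Finset.sum_comm]
    _ = (Nat.card A : ℂ)⁻¹ ^ 2 * Nat.card G * ∑ m : N, P m := by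
        simp only [hconj, hP, Finset.sum_const, Finset.card_univ, nsmul_eq_mul,
          Nat.card_eq_fintype_card]
        ring
    _ = _ := by rw [Finset.sum_comm]

section Character

variable [Fintype G] (N : Subgroup G) {A : Subgroup G} (V : FDRep ℂ A)

theorem exists_sum_extendByZero_character_eq_natCast (t : G) :
    ∃ k : ℕ, ∑ m : N, extendByZero A V.character m *
      extendByZero A V.character (t * (m : G)⁻¹ * t⁻¹) = k := by
  set K : Subgroup G := N ⊓ A ⊓ A.comap (MulAut.conj t).toMonoidHom
  have hKA : K ≤ A := inf_le_left.trans inf_le_right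
  let ψ : K →* A := ((MulAut.conj t).toMonoidHom.comp K.subtype).codRestrict A fun x => x.2.2
  refine ⟨Nat.card K * Module.finrank ℂ
    ((Action.res _ ψ).obj V ⟶ (Action.res _ (Subgroup.inclusion hKA)).obj V), ?_⟩
  rw [Nat.cast_mul, ← FDRep.sum_char_comp_mul_char_comp_inv,
    ← Subgroup.sum_eq_sum_of_le (inf_le_left.trans inf_le_left)
      fun g => extendByZero A V.character g * extendByZero A V.character (t * g⁻¹ * t⁻¹)]
  · refine Finset.sum_congr rfl fun x _ => ?_
    exact congrArg₂ (· * ·) (extendByZero_coe _ (Subgroup.inclusion hKA x))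
      (extendByZero_coe _ (ψ x⁻¹))
  · intro g hgN hgK
    by_cases hgA : g ∈ A
    · have hconj : t * g⁻¹ * t⁻¹ ∉ A := fun h =>
        hgK ⟨⟨hgN, hgA⟩, by simpa [Subgroup.mem_comap, mul_assoc] using inv_mem h⟩
      rw [extendByZero_of_notMem _ hconj, mul_zero]
    · rw [extendByZero_of_notMem _ hgA, zero_mul]

theorem sum_extendByZero_character_of_mem {t : G} (ht : t ∈ A) :
    ∑ m : N, extendByZero A V.character m * extendByZero A V.character (t * (m : G)⁻¹ * t⁻¹) =
      Nat.card ↥(A ⊓ N) * Module.finrank ℂ (V.resInf N ⟶ V.resInf N) := by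
  rw [← FDRep.sum_char_comp_mul_char_comp_inv, ← Subgroup.sum_eq_sum_of_le inf_le_right
    fun g => extendByZero A V.character g * extendByZero A V.character (t * g⁻¹ * t⁻¹)]
  · refine Finset.sum_congr rfl fun x _ => ?_
    have hconj : t * (x : G)⁻¹ * t⁻¹ =
        ((⟨t, ht⟩ * Subgroup.inclusion inf_le_left x⁻¹ * (⟨t, ht⟩ : A)⁻¹ : A) : G) := rfl
    rw [hconj, extendByZero_coe, FDRep.char_conj]
    exact congrArg (· * _) (extendByZero_coe _ (Subgroup.inclusion inf_le_left x))
  · intro g hgN hg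
    rw [extendByZero_of_notMem _ fun hgA => hg ⟨hgA, hgN⟩, zero_mul]

variable [N.Normal]

theorem exists_sum_indG_character_mul_indG_inv_eq :
    ∃ k : ℕ, ∑ n : N, indG A V.character n * indG A V.character (n⁻¹ : N) =
        (Nat.card A : ℂ)⁻¹ ^ 2 * Nat.card G * k ∧
      Nat.card A * (Nat.card ↥(A ⊓ N) * Module.finrank ℂ (V.resInf N ⟶ V.resInf N)) ≤ k := by
  choose k hk using exists_sum_extendByZero_character_eq_natCast N V
  refine ⟨∑ t, k t, by simp only [sum_indG_mul_indG_inv, hk, Nat.cast_sum], ?_⟩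
  have hkA : ∀ t ∈ Finset.univ.filter (· ∈ A),
      k t = Nat.card ↥(A ⊓ N) * Module.finrank ℂ (V.resInf N ⟶ V.resInf N) := fun t ht => by
    exact_mod_cast (hk t).symm.trans
      (sum_extendByZero_character_of_mem N V (Finset.mem_filter.mp ht).2)
  calc _ = ∑ t ∈ Finset.univ.filter (· ∈ A), k t := by
        rw [Finset.sum_congr rfl hkA, Finset.sum_const, smul_eq_mul, Nat.card_eq_fintype_card,
          Fintype.card_subtype]
    _ ≤ ∑ t, k t := Finset.sum_le_sum_of_subset (Finset.filter_subset _ _)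

theorem finrank_end_resInf_le_one
    (hnorm : ∑ n : N, indG A V.character n * indG A V.character (n⁻¹ : N) = Nat.card N) :
    Module.finrank ℂ (V.resInf N ⟶ V.resInf N) ≤ 1 := by
  obtain ⟨k, hk, hle⟩ := exists_sum_indG_character_mul_indG_inv_eq N V
  have hcount : Nat.card N * Nat.card A ^ 2 = Nat.card G * k := by
    have hA : (Nat.card A : ℂ) ≠ 0 := Nat.cast_ne_zero.mpr Nat.card_pos.ne'
    rw [← Nat.cast_inj (R := ℂ)]
    push_cast
    rw [← hnorm, hk]
    field_simp
  set e := Module.finrank ℂ (V.resInf N ⟶ V.resInf N)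
  have he : e * (Nat.card N * Nat.card A ^ 2) ≤ 1 * (Nat.card N * Nat.card A ^ 2) :=
    calc e * (Nat.card N * Nat.card A ^ 2) = Nat.card N * Nat.card A * (Nat.card A * e) := by
          ring
      _ ≤ Nat.card G * Nat.card ↥(A ⊓ N) * (Nat.card A * e) :=
        Nat.mul_le_mul_right _ (Subgroup.card_mul_card_le_card_mul_card_inf N A)
      _ = Nat.card G * (Nat.card A * (Nat.card ↥(A ⊓ N) * e)) := by ring
      _ ≤ Nat.card G * k := by gcongr
      _ = 1 * (Nat.card N * Nat.card A ^ 2) := by rw [one_mul, hcount]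
  exact Nat.le_of_mul_le_mul_right he (Nat.mul_pos Nat.card_pos (pow_pos Nat.card_pos 2))

end Character

theorem statement8_general {G : Type} [Group G] [Fintype G] (N : Subgroup G) [N.Normal]
    (A : Subgroup G) (α : ↥A → ℂ) (hα : IsIrrChar ↥A α)
    (hres : IsIrrChar ↥N fun n : ↥N => indG A α ↑n) :
    IsIrrChar ↥(A ⊓ N) (resSub (inf_le_left : A ⊓ N ≤ A) α) := by
  obtain ⟨V, hV, rfl⟩ := hα
  obtain ⟨Y, hY, hYχ⟩ := hres
  have hnorm := (FDRep.simple_iff_char_is_norm_one Y).mp hY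
  rw [hYχ] at hnorm
  refine ⟨V.resInf N, ?_, rfl⟩
  rw [FDRep.simple_iff_end_is_rank_one]
  exact (finrank_end_resInf_le_one N V hnorm).antisymm (FDRep.finrank_end_res_pos V _)

/-- If `N ◁ G`, `A ≤ G`, `α ∈ Irr(A)`, `α^G` is irreducible and `(α^G)_N` is irreducible,
then `α_{A ∩ N}` is irreducible. -/
theorem statement8 {G : Type} [Group G] [Fintype G] (N : Subgroup G) [N.Normal]
    (A : Subgroup G) (α : ↥A → ℂ) (hα : IsIrrChar ↥A α)
    (hind : IsIrrChar G (indG A α))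
    (hres : IsIrrChar ↥N fun n : ↥N => indG A α ↑n) :
    IsIrrChar ↥(A ⊓ N) (resSub (inf_le_left : A ⊓ N ≤ A) α) :=
  statement8_general N A α hα hres
end
end

section
/- Let G be a finite group, N a normal subgroup of G, χ ∈ Irr(G), and let (A, α) be a character pair in G with α^G = χ. Regard A as a group with normal subgroup A ∩ N. Then every vertex of the graph C_{A∩N}(α) (formed inside the group A) is a vertex of C_N(χ), and every edge of C_{A∩N}(α) is an edge of C_N(χ); consequently, any two character pairs connected in C_{A∩N}(α) are connected in C_N(χ). -/
open scoped BigOperators Classical Pointwise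

noncomputable section

variable {G : Type} [Group G]

/-!
Regard a subgroup `B ≤ A` as the subgroup `B.map A.subtype` of `G` and transport characters of
`B` along the isomorphism `B ≃* B.map A.subtype`. Induction in stages, `B → A → G`, shows that a
pair inducing `α` is sent to a pair inducing `α^G = χ`. Every ingredient of an edge (normality of
`C`, the stabiliser of `γ`, lying over `γ`, Clifford induction) is preserved by this transport, so
the map is an injective graph homomorphism `C_{A∩N}(α) →g C_N(χ)` and therefore preserves
reachability.
-/

theorem IsIrrChar.comp_mulEquiv {H K : Type} [Group H] [Group K] {f : K → ℂ}
    (hf : IsIrrChar K f) (e : H ≃* K) : IsIrrChar H (f ∘ e) := by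
  obtain ⟨V, hV, rfl⟩ := hf
  exact ⟨(Action.resEquiv _ e).functor.obj V, CategoryTheory.simple_obj _ V, rfl⟩

theorem charInner_comp_equiv {H K : Type} [Group H] [Group K] [Fintype H] [Fintype K]
    (e : H ≃* K) (f g : K → ℂ) : charInner H (f ∘ e) (g ∘ e) = charInner K f g := by
  simp only [charInner, Fintype.card_congr e.toEquiv, Function.comp_apply]
  congr 1
  exact Fintype.sum_equiv e.toEquiv _ _ fun _ => rfl

def extendZero (B : Subgroup G) (f : B → ℂ) : G → ℂ :=
  fun x => if h : x ∈ B then f ⟨x, h⟩ else 0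

theorem extendZero_of_mem {B : Subgroup G} (f : B → ℂ) {x : G} (hx : x ∈ B) :
    extendZero B f x = f ⟨x, hx⟩ :=
  dif_pos hx

theorem extendZero_of_notMem {B : Subgroup G} (f : B → ℂ) {x : G} (hx : x ∉ B) :
    extendZero B f x = 0 :=
  dif_neg hx

theorem indG_eq_sum_extendZero [Fintype G] (A : Subgroup G) (f : A → ℂ) (g : G) :
    indG A f g = (Fintype.card A : ℂ)⁻¹ * ∑ x : G, extendZero A f (x * g * x⁻¹) :=
  rfl

theorem indSub_eq_sum_extendZero [Fintype G] {B A : Subgroup G} (h : B ≤ A) (f : B → ℂ)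
    (a : A) :
    indSub h f a = (Fintype.card B : ℂ)⁻¹ * ∑ x : A, extendZero B f (x * a * x⁻¹) :=
  rfl

section MapFun

variable {H : Type} [Group H] (φ : H →* G) (hφ : Function.Injective φ)

def mapFun {B : Subgroup H} (f : B → ℂ) : B.map φ → ℂ :=
  f ∘ (B.equivMapOfInjective φ hφ).symm

variable {φ}

theorem equivMapOfInjective_symm_apply_mk {B : Subgroup H} (y : B) (hy : φ y ∈ B.map φ) :
    (B.equivMapOfInjective φ hφ).symm ⟨φ y, hy⟩ = y :=
  (MulEquiv.symm_apply_eq _).mpr (Subtype.ext (B.coe_equivMapOfInjective_apply φ hφ y).symm)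

theorem mapFun_apply_of_eq {B : Subgroup H} (f : B → ℂ) {z : G} (hz : z ∈ B.map φ) (y : B)
    (hyz : φ y = z) : mapFun φ hφ f ⟨z, hz⟩ = f y := by
  subst hyz
  exact congrArg f (equivMapOfInjective_symm_apply_mk hφ y hz)

theorem extendZero_mapFun_apply {B : Subgroup H} (f : B → ℂ) (h : H) :
    extendZero (B.map φ) (mapFun φ hφ f) (φ h) = extendZero B f h := by
  by_cases hB : h ∈ B
  · rw [extendZero_of_mem _ (Subgroup.mem_map_of_mem φ hB), extendZero_of_mem _ hB]
    exact mapFun_apply_of_eq hφ f _ ⟨h, hB⟩ rfl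
  · rw [extendZero_of_notMem _ ((Subgroup.mem_map_iff_mem hφ).not.mpr hB),
      extendZero_of_notMem _ hB]

theorem isIrrChar_mapFun {B : Subgroup H} {f : B → ℂ} (hf : IsIrrChar B f) :
    IsIrrChar (B.map φ) (mapFun φ hφ f) :=
  hf.comp_mulEquiv _

theorem resSub_mapFun {C B : Subgroup H} (hCB : C ≤ B) (f : B → ℂ) :
    resSub (Subgroup.map_mono hCB) (mapFun φ hφ f) =
      resSub hCB f ∘ (C.equivMapOfInjective φ hφ).symm := by
  funext ⟨x, hx⟩
  obtain ⟨c, hc, rfl⟩ := Subgroup.mem_map.mp hx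
  simp only [resSub, Function.comp_apply]
  rw [mapFun_apply_of_eq hφ f _ ⟨c, hCB hc⟩ rfl]
  congr 1
  exact Subtype.ext (congrArg Subtype.val (equivMapOfInjective_symm_apply_mk hφ ⟨c, hc⟩ hx)).symm

theorem conj_mem_map {U C : Subgroup H} (h : ∀ a ∈ U, ∀ c ∈ C, a * c * a⁻¹ ∈ C) :
    ∀ a ∈ U.map φ, ∀ c ∈ C.map φ, a * c * a⁻¹ ∈ C.map φ := by
  rintro _ ⟨a, ha, rfl⟩ _ ⟨c, hc, rfl⟩
  simpa only [map_mul, map_inv] using Subgroup.mem_map_of_mem φ (h a ha c hc)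

theorem liesOver_mapFun_iff [Fintype H] [Fintype G] {C B : Subgroup H} (hCB : C ≤ B)
    (f : B → ℂ) (γ : C → ℂ) :
    LiesOver (Subgroup.map_mono hCB) (mapFun φ hφ f) (mapFun φ hφ γ) ↔ LiesOver hCB f γ := by
  rw [LiesOver, resSub_mapFun, mapFun, charInner_comp_equiv, LiesOver]

theorem conjFix_mapFun_iff {C : Subgroup H} (γ : C → ℂ) (a : H) :
    ConjFix (mapFun φ hφ γ) (φ a) ↔ ConjFix γ a := by
  constructor
  · intro h x hx hx'
    have hmem : φ a * φ x * (φ a)⁻¹ ∈ C.map φ := by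
      simpa only [map_mul, map_inv] using Subgroup.mem_map_of_mem φ hx'
    have := h (φ x) (Subgroup.mem_map_of_mem φ hx) hmem
    rwa [mapFun_apply_of_eq hφ γ hmem ⟨_, hx'⟩ (by simp only [map_mul, map_inv]),
      mapFun_apply_of_eq hφ γ _ ⟨x, hx⟩ rfl] at this
  · intro h z hz hz'
    obtain ⟨x, hx, rfl⟩ := Subgroup.mem_map.mp hz
    have hx' : a * x * a⁻¹ ∈ C := by
      rw [← Subgroup.mem_map_iff_mem hφ]
      simpa only [map_mul, map_inv] using hz'
    rw [mapFun_apply_of_eq hφ γ hz' ⟨_, hx'⟩ (by simp only [map_mul, map_inv]),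
      mapFun_apply_of_eq hφ γ hz ⟨x, hx⟩ rfl]
    exact h x hx hx'

theorem coe_map_eq_setOf_conjFix {B U C : Subgroup H} {γ : C → ℂ}
    (h : (B : Set H) = {a | a ∈ U ∧ ConjFix γ a}) :
    (B.map φ : Set G) = {z | z ∈ U.map φ ∧ ConjFix (mapFun φ hφ γ) z} := by
  rw [Subgroup.coe_map, h]
  ext z
  constructor
  · rintro ⟨a, ⟨ha, hγ⟩, rfl⟩
    exact ⟨Subgroup.mem_map_of_mem φ ha, (conjFix_mapFun_iff hφ γ a).mpr hγ⟩
  · rintro ⟨hz, hγ⟩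
    obtain ⟨a, ha, rfl⟩ := Subgroup.mem_map.mp hz
    exact ⟨a, ⟨ha, (conjFix_mapFun_iff hφ γ a).mp hγ⟩, rfl⟩

theorem indSub_mapFun [Fintype H] [Fintype G] {B U : Subgroup H} (hBU : B ≤ U) (f : B → ℂ) :
    indSub (Subgroup.map_mono hBU) (mapFun φ hφ f) = mapFun φ hφ (indSub hBU f) := by
  set e := U.equivMapOfInjective φ hφ
  have hcoe : ∀ y : U.map φ, (y : G) = φ (e.symm y) := fun y => by
    rw [← U.coe_equivMapOfInjective_apply φ hφ, MulEquiv.apply_symm_apply]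
  funext a
  change _ = indSub hBU f (e.symm a)
  rw [indSub_eq_sum_extendZero, indSub_eq_sum_extendZero,
    Fintype.card_congr (B.equivMapOfInjective φ hφ).toEquiv]
  congr 1
  refine Fintype.sum_equiv e.symm.toEquiv _ _ fun x => ?_
  have hconj : (x : G) * a * (x⁻¹ : U.map φ) = φ (e.symm (x * a * x⁻¹)) := hcoe (x * a * x⁻¹)
  rw [hconj, extendZero_mapFun_apply, map_mul, map_mul, map_inv]
  rfl

end MapFun

section Subtype

variable (A : Subgroup G)

theorem extendZero_map_subtype (B : Subgroup A) (f : B → ℂ) :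
    extendZero (B.map A.subtype) (mapFun A.subtype A.subtype_injective f) =
      extendZero A (extendZero B f) := by
  funext z
  by_cases hz : z ∈ A
  · rw [extendZero_of_mem _ hz]
    exact extendZero_mapFun_apply A.subtype_injective f ⟨z, hz⟩
  · rw [extendZero_of_notMem _ hz,
      extendZero_of_notMem _ fun h => hz (Subgroup.map_subtype_le B h)]

theorem extendZero_indG [Fintype G] (B : Subgroup A) (f : B → ℂ) (z : G) :
    extendZero A (indG B f) z = (Fintype.card B : ℂ)⁻¹ *
      ∑ y : A, extendZero A (extendZero B f) ((y : G) * z * (y : G)⁻¹) := by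
  by_cases hz : z ∈ A
  · rw [extendZero_of_mem _ hz, indG_eq_sum_extendZero]
    congr 1
    refine Finset.sum_congr rfl fun y _ => ?_
    rw [extendZero_of_mem _ (A.mul_mem (A.mul_mem y.2 hz) (A.inv_mem y.2))]
    rfl
  · rw [extendZero_of_notMem _ hz, Finset.sum_eq_zero, mul_zero]
    intro y _
    refine extendZero_of_notMem _ fun h => ?_
    exact hz ((A.mul_mem_cancel_left y.2).mp ((A.mul_mem_cancel_right (A.inv_mem y.2)).mp h))

theorem indG_map_subtype [Fintype G] (B : Subgroup A) (f : B → ℂ) :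
    indG (B.map A.subtype) (mapFun A.subtype A.subtype_injective f) = indG A (indG B f) := by
  funext g
  have hshift (F : G → ℂ) (y : A) :
      ∑ x : G, F (y * (x * g * x⁻¹) * (y : G)⁻¹) = ∑ x : G, F (x * g * x⁻¹) := by
    rw [← Equiv.sum_comp (Equiv.mulLeft (y : G)) (fun x => F (x * g * x⁻¹))]
    simp only [Equiv.coe_mulLeft, mul_inv_rev, mul_assoc]
  rw [indG_eq_sum_extendZero, indG_eq_sum_extendZero, extendZero_map_subtype,
    ← Fintype.card_congr (B.equivMapOfInjective _ A.subtype_injective).toEquiv]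
  simp_rw [extendZero_indG, ← Finset.mul_sum]
  rw [Finset.sum_comm]
  simp_rw [hshift, Finset.sum_const, Finset.card_univ, nsmul_eq_mul]
  field_simp

end Subtype

namespace CharPair

variable [Fintype G] {χ : G → ℂ} (v : CharPair G χ)

def mapSubtype (u : CharPair v.A v.α) : CharPair G χ where
  A := u.A.map v.A.subtype
  α := mapFun v.A.subtype v.A.subtype_injective u.α
  irr := isIrrChar_mapFun _ u.irr
  ind_eq := by rw [indG_map_subtype, u.ind_eq, v.ind_eq]

theorem mapSubtype_injective : Function.Injective v.mapSubtype := by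
  rintro ⟨B, β, _, _⟩ ⟨B', β', _, _⟩ h
  simp only [mapSubtype, CharPair.mk.injEq] at h
  obtain rfl := Subgroup.map_injective v.A.subtype_injective h.1
  obtain rfl : β = β' := (MulEquiv.surjective _).injective_comp_right (eq_of_heq h.2)
  rfl

theorem edgeSpec_mapSubtype (N : Subgroup G) {u w : CharPair v.A v.α}
    (h : EdgeSpec (N.subgroupOf v.A) u w) : EdgeSpec N (v.mapSubtype u) (v.mapSubtype w) := by
  obtain ⟨C, γ, hCu, hCw, hwu, hnorm, hCN, hirr, hstab, hlies, hind⟩ := h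
  have hφ := v.A.subtype_injective
  refine ⟨C.map v.A.subtype, mapFun _ hφ γ, Subgroup.map_mono hCu, Subgroup.map_mono hCw,
    Subgroup.map_mono hwu, conj_mem_map hnorm, Subgroup.map_le_iff_le_comap.mpr hCN,
    isIrrChar_mapFun hφ hirr, coe_map_eq_setOf_conjFix hφ hstab,
    (liesOver_mapFun_iff hφ hCw w.α γ).mpr hlies, ?_⟩
  exact (indSub_mapFun hφ hwu w.α).trans (congrArg _ hind)

def mapSubtypeHom (N : Subgroup G) :
    cliffordGraph v.α (N.subgroupOf v.A) →g cliffordGraph χ N where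
  toFun := v.mapSubtype
  map_rel' h := ⟨v.mapSubtype_injective.ne h.1,
    h.2.imp (v.edgeSpec_mapSubtype N) (v.edgeSpec_mapSubtype N)⟩

end CharPair

theorem statement9_general {G : Type} [Group G] [Fintype G] (χ : G → ℂ) (N : Subgroup G)
    (v : CharPair G χ) :
    ∃ Φ : CharPair ↥v.A v.α → CharPair G χ,
      (∀ u, (Φ u).A = u.A.map v.A.subtype) ∧
      (∀ (u : CharPair ↥v.A v.α) (y : ↥u.A) (hy : ((y : ↥v.A) : G) ∈ (Φ u).A),
        (Φ u).α ⟨((y : ↥v.A) : G), hy⟩ = u.α y) ∧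
      (∀ u w, (cliffordGraph v.α (N.subgroupOf v.A)).Adj u w →
        (cliffordGraph χ N).Adj (Φ u) (Φ w)) ∧
      (∀ u w, (cliffordGraph v.α (N.subgroupOf v.A)).Reachable u w →
        (cliffordGraph χ N).Reachable (Φ u) (Φ w)) :=
  ⟨v.mapSubtype, fun _ => rfl, fun u y hy => mapFun_apply_of_eq _ u.α hy y rfl,
    fun _ _ => (v.mapSubtypeHom N).map_adj, fun _ _ h => h.map (v.mapSubtypeHom N)⟩

/-- For a character pair `(A, α) = v` inducing `χ`, the graph `C_{A∩N}(α)` formed inside the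
group `A` maps into `C_N(χ)`: every vertex corresponds to a vertex (the pair obtained by
regarding a subgroup of `A` as a subgroup of `G`), every edge to an edge, and consequently
reachability in `C_{A∩N}(α)` implies reachability in `C_N(χ)`. -/
theorem statement9 {G : Type} [Group G] [Fintype G] (χ : G → ℂ) (N : Subgroup G) [N.Normal]
    (v : CharPair G χ) :
    ∃ Φ : CharPair ↥v.A v.α → CharPair G χ,
      (∀ u, (Φ u).A = u.A.map v.A.subtype) ∧
      (∀ (u : CharPair ↥v.A v.α) (y : ↥u.A) (hy : ((y : ↥v.A) : G) ∈ (Φ u).A),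
        (Φ u).α ⟨((y : ↥v.A) : G), hy⟩ = u.α y) ∧
      (∀ u w, (cliffordGraph v.α (N.subgroupOf v.A)).Adj u w →
        (cliffordGraph χ N).Adj (Φ u) (Φ w)) ∧
      (∀ u w, (cliffordGraph v.α (N.subgroupOf v.A)).Reachable u w →
        (cliffordGraph χ N).Reachable (Φ u) (Φ w)) :=
  statement9_general χ N v
end
end

section
/- Let G be a finite group with normal subgroups N and R, set L = N ∩ R, and suppose R/L is abelian and N centralizes R/L (which holds since [N, R] ⊆ L). Let θ ∈ Irr(L) be G-invariant and let φ ∈ Irr(R) satisfy φ_L = θ. Let B be the stabilizer of φ in G and assume G = NB. Identifying Irr(R/L) with the group of linear characters of R trivial on L, define Δ = { λ ∈ Irr(R/L) : φλ = φ^g for some g ∈ N }. Then Δ is a subgroup of Irr(R/L), and Δ is invariant under the conjugation action of G on Irr(R/L). -/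
open scoped BigOperators Classical Pointwise

noncomputable section

variable {G : Type} [Group G]

/-!
Write `φ^g` for `conjChar hR φ g`, so that `(φ^g)^h = φ^(g h)`, and view `λ ∈ Irr(R/L)` as a
function `R → ℂ`. Since `⁅N, R⁆ ≤ L`, every such `λ` is `N`-invariant. Hence `φλ = φ^g` and
`φμ = φ^h` with `g, h ∈ N` give `φλμ = φ^g μ^g = (φμ)^g = φ^(h g)`, and conjugating `φλ = φ^g`
by `g⁻¹` gives `φλ⁻¹ = φ^(g⁻¹)`. For `G`-invariance write `g = n₀ b` with `n₀ ∈ N` and `φ^b = φ`: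
then `λ^g = λ^b`, and conjugating `φλ = φ^n` by `b` gives `φλ^b = φ^(n b) = φ^(b⁻¹ n b)`.
-/

section Conjugation

variable {R : Subgroup G} (hR : R.Normal)

lemma conjChar_one (φ : ↥R → ℂ) : conjChar hR φ 1 = φ := by
  funext x
  simp [conjChar]

lemma conjChar_conjChar (φ : ↥R → ℂ) (g h : G) :
    conjChar hR (conjChar hR φ g) h = conjChar hR φ (g * h) := by
  funext x
  simp only [conjChar, mul_inv_rev, mul_assoc]

lemma conjChar_mul (φ ψ : ↥R → ℂ) (g : G) :
    conjChar hR (φ * ψ) g = conjChar hR φ g * conjChar hR ψ g :=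
  rfl

lemma conjChar_eq_self_iff (φ : ↥R → ℂ) (g : G) : conjChar hR φ g = φ ↔ ConjFix φ g :=
  ⟨fun h x hx _ => congrFun h ⟨x, hx⟩, fun h => funext fun x => h x x.2 _⟩

end Conjugation

lemma map_conj_eq_of_commutator {M : Type*} [Monoid M] {N R : Subgroup G} (f : ↥R →* M)
    (hf : ∀ x : ↥R, (x : G) ∈ ⁅N, R⁆ → f x = 1) {n : G} (hn : n ∈ N) (x : ↥R)
    (hx : n * x * n⁻¹ ∈ R) : f ⟨n * x * n⁻¹, hx⟩ = f x := by
  have hc : n * x * n⁻¹ * (x : G)⁻¹ ∈ ⁅N, R⁆ := Subgroup.commutator_mem_commutator hn x.2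
  have hcR : n * x * n⁻¹ * (x : G)⁻¹ ∈ R := mul_mem hx (inv_mem x.2)
  have hsplit : (⟨n * x * n⁻¹, hx⟩ : ↥R) = ⟨_, hcR⟩ * x := Subtype.ext (by simp)
  rw [hsplit, map_mul, hf _ hc, one_mul]

section Delta

variable {N R : Subgroup G}

lemma conjChar_units_eq_self (hR : R.Normal) (hcent : ⁅N, R⁆ ≤ N ⊓ R) {lam : ↥R →* ℂˣ}
    (hlam : ∀ x : ↥R, (x : G) ∈ N ⊓ R → lam x = 1) {n : G} (hn : n ∈ N) :
    conjChar hR (fun x => (lam x : ℂ)) n = fun x => (lam x : ℂ) :=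
  funext fun x => congrArg Units.val <|
    map_conj_eq_of_commutator lam (fun y hy => hlam y (hcent hy)) hn x _

lemma mem_Delta_iff (hR : R.Normal) (φ : ↥R → ℂ) (lam : ↥R →* ℂˣ) :
    lam ∈ Delta N R φ ↔ (∀ x : ↥R, (x : G) ∈ N ⊓ R → lam x = 1) ∧
      ∃ g ∈ N, φ * (fun x => (lam x : ℂ)) = conjChar hR φ g := by
  refine and_congr_right fun _ => exists_congr fun g => and_congr_right fun _ => ?_
  exact ⟨fun h => funext fun x => h x _, fun h x _ => congrFun h x⟩

lemma one_mem_Delta (φ : ↥R → ℂ) : (1 : ↥R →* ℂˣ) ∈ Delta N R φ :=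
  ⟨fun _ _ => rfl, 1, one_mem N, fun x _ => by simp⟩

lemma mul_mem_Delta (hR : R.Normal) (hcent : ⁅N, R⁆ ≤ N ⊓ R) {φ : ↥R → ℂ} {lam mu : ↥R →* ℂˣ}
    (hlam : lam ∈ Delta N R φ) (hmu : mu ∈ Delta N R φ) : lam * mu ∈ Delta N R φ := by
  obtain ⟨hlam_triv, g, hg, hφlam⟩ := (mem_Delta_iff hR φ lam).1 hlam
  obtain ⟨hmu_triv, h, hh, hφmu⟩ := (mem_Delta_iff hR φ mu).1 hmu
  refine (mem_Delta_iff hR φ _).2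
    ⟨fun x hx => by simp [hlam_triv x hx, hmu_triv x hx], h * g, mul_mem hh hg, ?_⟩
  calc φ * (fun x => ((lam * mu) x : ℂ))
      = (φ * fun x => (lam x : ℂ)) * fun x => (mu x : ℂ) := by
        funext x
        simp [mul_assoc]
    _ = conjChar hR φ g * conjChar hR (fun x => (mu x : ℂ)) g := by
        rw [hφlam, conjChar_units_eq_self hR hcent hmu_triv hg]
    _ = conjChar hR (conjChar hR φ h) g := by rw [← conjChar_mul, hφmu]
    _ = conjChar hR φ (h * g) := conjChar_conjChar hR φ h g

lemma inv_mem_Delta (hR : R.Normal) (hcent : ⁅N, R⁆ ≤ N ⊓ R) {φ : ↥R → ℂ} {lam : ↥R →* ℂˣ}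
    (hlam : lam ∈ Delta N R φ) : lam⁻¹ ∈ Delta N R φ := by
  obtain ⟨hlam_triv, g, hg, hφlam⟩ := (mem_Delta_iff hR φ lam).1 hlam
  have hinv_triv : ∀ x : ↥R, (x : G) ∈ N ⊓ R → lam⁻¹ x = 1 := fun x hx => by
    simp [hlam_triv x hx]
  refine (mem_Delta_iff hR φ _).2 ⟨hinv_triv, g⁻¹, inv_mem hg, ?_⟩
  calc φ * (fun x => (lam⁻¹ x : ℂ))
      = conjChar hR (conjChar hR φ g) g⁻¹ * conjChar hR (fun x => (lam⁻¹ x : ℂ)) g⁻¹ := by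
        rw [conjChar_conjChar, mul_inv_cancel, conjChar_one,
          conjChar_units_eq_self hR hcent hinv_triv (inv_mem hg)]
    _ = conjChar hR ((φ * fun x => (lam x : ℂ)) * fun x => (lam⁻¹ x : ℂ)) g⁻¹ := by
        rw [conjChar_mul, hφlam]
    _ = conjChar hR φ g⁻¹ := by
        congr 1
        funext x
        simp

lemma conj_mem_Delta (hN : N.Normal) (hR : R.Normal) (hcent : ⁅N, R⁆ ≤ N ⊓ R) {φ : ↥R → ℂ}
    {n₀ b : G} (hn₀ : n₀ ∈ N) (hb : ConjFix φ b) {lam : ↥R →* ℂˣ} (hlam : lam ∈ Delta N R φ)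
    (lam' : ↥R →* ℂˣ)
    (hlam' : ∀ x : ↥R, lam' x = lam ⟨n₀ * b * x * (n₀ * b)⁻¹, hR.conj_mem x x.2 (n₀ * b)⟩) :
    lam' ∈ Delta N R φ := by
  obtain ⟨hlam_triv, n, hn, hφlam⟩ := (mem_Delta_iff hR φ lam).1 hlam
  have hφb : conjChar hR φ b = φ := (conjChar_eq_self_iff hR φ b).2 hb
  have hlam'_eq : (fun x => (lam' x : ℂ)) = conjChar hR (fun x => (lam x : ℂ)) b := by
    rw [← conjChar_units_eq_self hR hcent hlam_triv hn₀, conjChar_conjChar]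
    funext x
    simp [hlam', conjChar]
  refine (mem_Delta_iff hR φ _).2 ⟨fun x hx => ?_, b⁻¹ * n * b, ?_, ?_⟩
  · rw [hlam' x]
    exact hlam_triv _ ⟨hN.conj_mem _ hx.1 _, hR.conj_mem _ hx.2 _⟩
  · simpa using hN.conj_mem n hn b⁻¹
  calc φ * (fun x => (lam' x : ℂ))
      = conjChar hR φ b * conjChar hR (fun x => (lam x : ℂ)) b := by rw [hlam'_eq, hφb]
    _ = conjChar hR (conjChar hR φ n) b := by rw [← conjChar_mul, hφlam]
    _ = conjChar hR φ (b * (b⁻¹ * n * b)) := by rw [conjChar_conjChar]; group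
    _ = conjChar hR φ (b⁻¹ * n * b) := by rw [← conjChar_conjChar, hφb]

end Delta

theorem statement13_general {G : Type} [Group G] (N R : Subgroup G)
    [hN : N.Normal] [hR : R.Normal]
    (hcent : ⁅N, R⁆ ≤ N ⊓ R)
    (φ : ↥R → ℂ)
    (B : Subgroup G) (hB : ∀ g : G, g ∈ B ↔ ConjFix φ g)
    (hNB : (N : Set G) * (B : Set G) = Set.univ) :
    -- Δ is a subgroup of Irr(R/L) :
    ((1 : ↥R →* ℂˣ) ∈ Delta N R φ) ∧
    (∀ lam ∈ Delta N R φ, ∀ mu ∈ Delta N R φ, lam * mu ∈ Delta N R φ) ∧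
    (∀ lam ∈ Delta N R φ, lam⁻¹ ∈ Delta N R φ) ∧
    -- Δ is invariant under the conjugation action of G :
    (∀ (g : G), ∀ lam ∈ Delta N R φ, ∀ lam' : ↥R →* ℂˣ,
      (∀ x : ↥R, lam' x = lam ⟨g * (x : G) * g⁻¹, hR.conj_mem (x : G) x.2 g⟩) →
      lam' ∈ Delta N R φ) := by
  refine ⟨one_mem_Delta φ, fun _ hlam _ hmu => mul_mem_Delta hR hcent hlam hmu,
    fun _ hlam => inv_mem_Delta hR hcent hlam, ?_⟩
  intro g lam hlam lam' hlam'
  obtain ⟨n₀, hn₀, b, hb, rfl⟩ := Set.mem_mul.1 (hNB ▸ Set.mem_univ g)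
  exact conj_mem_Delta hN hR hcent hn₀ ((hB b).1 hb) hlam lam' hlam'

/-- With `N, R ◁ G`, `L = N ⊓ R`, `R/L` abelian, `θ ∈ Irr(L)` `G`-invariant, `φ ∈ Irr(R)`
with `φ_L = θ`, `B` the stabilizer of `φ` in `G` and `G = NB`, the set
`Δ = {λ ∈ Irr(R/L) : φλ = φ^g for some g ∈ N}` is a subgroup of `Irr(R/L)` invariant under
the conjugation action of `G`. -/
theorem statement13 {G : Type} [Group G] [Fintype G] (N R : Subgroup G)
    [hN : N.Normal] [hR : R.Normal]
    (habel : ⁅R, R⁆ ≤ N ⊓ R) (hcent : ⁅N, R⁆ ≤ N ⊓ R)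
    (θ : ↥(N ⊓ R) → ℂ) (hθ : IsIrrChar ↥(N ⊓ R) θ) (hθinv : ∀ g : G, ConjFix θ g)
    (φ : ↥R → ℂ) (hφ : IsIrrChar ↥R φ)
    (hφθ : resSub (inf_le_right : N ⊓ R ≤ R) φ = θ)
    (B : Subgroup G) (hB : ∀ g : G, g ∈ B ↔ ConjFix φ g)
    (hNB : (N : Set G) * (B : Set G) = Set.univ) :
    -- Δ is a subgroup of Irr(R/L) :
    ((1 : ↥R →* ℂˣ) ∈ Delta N R φ) ∧
    (∀ lam ∈ Delta N R φ, ∀ mu ∈ Delta N R φ, lam * mu ∈ Delta N R φ) ∧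
    (∀ lam ∈ Delta N R φ, lam⁻¹ ∈ Delta N R φ) ∧
    -- Δ is invariant under the conjugation action of G :
    (∀ (g : G), ∀ lam ∈ Delta N R φ, ∀ lam' : ↥R →* ℂˣ,
      (∀ x : ↥R, lam' x = lam ⟨g * (x : G) * g⁻¹, hR.conj_mem (x : G) x.2 g⟩) →
      lam' ∈ Delta N R φ) :=
  statement13_general N R (hN := hN) (hR := hR) hcent φ B hB hNB
end
end
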